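/- arXiv:1201.3470 — 3 statements merged into one kernel-verified Lean document; each statement's English description precedes it below -/
import Mathlib

section
/- For fixed ρ > 0, the function e(ρ, ·, ·) : ℝⁿ × Sym₀ⁿ → ℝ defined by e(ρ, m, U) = λ_max((m⊗m)/ρ − U) is convex, where λ_max denotes the largest eigenvalue of a symmetric matrix and Sym₀ⁿ is the space of trace-free symmetric n×n real matrices. -/
open Matrix

noncomputable def lambdaMax {n : ℕ} (S : Matrix (Fin n) (Fin n) ℝ) : ℝ :=
  sSup {r : ℝ | ∃ v : Fin n → ℝ, (∑ i, v i ^ 2) = 1 ∧ r = v ⬝ᵥ S.mulVec v}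

lemma lam_bdd {n : ℕ} (S : Matrix (Fin n) (Fin n) ℝ) :
    BddAbove {r : ℝ | ∃ v : Fin n → ℝ, (∑ i, v i ^ 2) = 1 ∧ r = v ⬝ᵥ S.mulVec v} := by
  refine ⟨∑ i, ∑ j, |S i j|, ?_⟩
  rintro r ⟨v, hv, rfl⟩
  have hvi : ∀ i, |v i| ≤ 1 := by
    intro i
    have h1 : v i ^ 2 ≤ 1 := by
      rw [← hv]
      exact Finset.single_le_sum (fun j _ => sq_nonneg (v j)) (Finset.mem_univ i)
    nlinarith [abs_nonneg (v i), sq_abs (v i)]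
  have : v ⬝ᵥ S.mulVec v = ∑ i, ∑ j, v i * (S i j * v j) := by
    simp [dotProduct, mulVec, Finset.mul_sum]
  rw [this]
  refine Finset.sum_le_sum fun i _ => Finset.sum_le_sum fun j _ => ?_
  calc v i * (S i j * v j) ≤ |v i * (S i j * v j)| := le_abs_self _
    _ = |v i| * |S i j| * |v j| := by rw [abs_mul, abs_mul]; ring
    _ ≤ 1 * |S i j| * 1 := by
        have h1 := hvi i
        have h2 := hvi j
        have h3 := abs_nonneg (S i j)
        have h5 := abs_nonneg (v j)
        exact mul_le_mul (mul_le_mul_of_nonneg_right h1 h3) h2 h5 (by positivity)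
    _ = |S i j| := by ring

lemma quad_form {n : ℕ} (ρ : ℝ) (m v : Fin n → ℝ) (U : Matrix (Fin n) (Fin n) ℝ) :
    v ⬝ᵥ (ρ⁻¹ • vecMulVec m m - U).mulVec v
      = ρ⁻¹ * (m ⬝ᵥ v) ^ 2 - v ⬝ᵥ U.mulVec v := by
  rw [Matrix.sub_mulVec, dotProduct_sub, Matrix.smul_mulVec, dotProduct_smul]
  have : v ⬝ᵥ (vecMulVec m m).mulVec v = (m ⬝ᵥ v) ^ 2 := by
    have h : (vecMulVec m m).mulVec v = (m ⬝ᵥ v) • m := by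
      ext i
      simp [vecMulVec, mulVec, dotProduct, Finset.mul_sum, mul_comm, mul_left_comm]
    rw [h, dotProduct_smul, dotProduct_comm]
    simp [sq, smul_eq_mul]
  rw [this]
  simp [smul_eq_mul]

theorem stmt_1 {n : ℕ} (ρ : ℝ) (hρ : 0 < ρ) :
    ConvexOn ℝ
      {p : (Fin n → ℝ) × Matrix (Fin n) (Fin n) ℝ | p.2.IsSymm ∧ p.2.trace = 0}
      (fun p => lambdaMax (ρ⁻¹ • vecMulVec p.1 p.1 - p.2)) := by
  have hconv : Convex ℝ {p : (Fin n → ℝ) × Matrix (Fin n) (Fin n) ℝ | p.2.IsSymm ∧ p.2.trace = 0} := by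
    intro p hp q hq a b ha hb hab
    constructor
    · have h1 := hp.1; have h2 := hq.1
      simp only [Matrix.IsSymm] at *
      simp [Matrix.transpose_add, Matrix.transpose_smul, h1, h2]
    · simp [Matrix.trace_add, Matrix.trace_smul, hp.2, hq.2]
  refine ⟨hconv, ?_⟩
  intro p hp q hq a b ha hb hab
  rcases Nat.eq_zero_or_pos n with hn | hn
  · subst hn
    have hempty : ∀ S : Matrix (Fin 0) (Fin 0) ℝ, lambdaMax S = 0 := by
      intro S
      have : {r : ℝ | ∃ v : Fin 0 → ℝ, (∑ i, v i ^ 2) = 1 ∧ r = v ⬝ᵥ S.mulVec v} = ∅ := by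
        ext r; simp
      rw [lambdaMax, this, Real.sSup_empty]
    simp [hempty]
  -- n > 0 case
  set F := fun p : (Fin n → ℝ) × Matrix (Fin n) (Fin n) ℝ =>
      ρ⁻¹ • vecMulVec p.1 p.1 - p.2 with hF
  show lambdaMax (F (a • p + b • q)) ≤ a * lambdaMax (F p) + b * lambdaMax (F q)
  have hne : ({r : ℝ | ∃ v : Fin n → ℝ, (∑ i, v i ^ 2) = 1 ∧
      r = v ⬝ᵥ (F (a • p + b • q)).mulVec v}).Nonempty := by
    refine ⟨_, Pi.single ⟨0, hn⟩ 1, ?_, rfl⟩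
    simp [Pi.single_apply]
  rw [lambdaMax]
  apply csSup_le hne
  rintro r ⟨v, hv, rfl⟩
  have hkey : v ⬝ᵥ (F (a • p + b • q)).mulVec v
      ≤ a * (v ⬝ᵥ (F p).mulVec v) + b * (v ⬝ᵥ (F q).mulVec v) := by
    have h1 : (a • p + b • q).1 = a • p.1 + b • q.1 := rfl
    have h2 : (a • p + b • q).2 = a • p.2 + b • q.2 := rfl
    simp only [hF, quad_form]
    rw [h1, h2]
    have hd : (a • p.1 + b • q.1) ⬝ᵥ v = a * (p.1 ⬝ᵥ v) + b * (q.1 ⬝ᵥ v) := by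
      simp [add_dotProduct, smul_dotProduct, smul_eq_mul]
    have hU : v ⬝ᵥ (a • p.2 + b • q.2).mulVec v
        = a * (v ⬝ᵥ p.2.mulVec v) + b * (v ⬝ᵥ q.2.mulVec v) := by
      rw [Matrix.add_mulVec, dotProduct_add, Matrix.smul_mulVec,
        Matrix.smul_mulVec, dotProduct_smul, dotProduct_smul]
      simp [smul_eq_mul]
    rw [hd, hU]
    have hρi : 0 < ρ⁻¹ := inv_pos.mpr hρ
    set t₁ := p.1 ⬝ᵥ v
    set t₂ := q.1 ⬝ᵥ v
    have key : (a * t₁ + b * t₂) ^ 2 ≤ a * t₁ ^ 2 + b * t₂ ^ 2 := by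
      nlinarith [sq_nonneg (t₁ - t₂), mul_nonneg ha hb,
        mul_nonneg (mul_nonneg ha hb) (sq_nonneg (t₁ - t₂))]
    have key2 := mul_le_mul_of_nonneg_left key hρi.le
    nlinarith [key2]
  have hle1 : v ⬝ᵥ (F p).mulVec v ≤ lambdaMax (F p) :=
    le_csSup (lam_bdd _) ⟨v, hv, rfl⟩
  have hle2 : v ⬝ᵥ (F q).mulVec v ≤ lambdaMax (F q) :=
    le_csSup (lam_bdd _) ⟨v, hv, rfl⟩
  calc v ⬝ᵥ (F (a • p + b • q)).mulVec v
      ≤ a * (v ⬝ᵥ (F p).mulVec v) + b * (v ⬝ᵥ (F q).mulVec v) := hkey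
    _ ≤ a * lambdaMax (F p) + b * lambdaMax (F q) := by
        have := mul_le_mul_of_nonneg_left hle1 ha
        have := mul_le_mul_of_nonneg_left hle2 hb
        linarith
end

section
/- For every ρ > 0, m ∈ ℝⁿ, and trace-free symmetric n×n matrix U, the operator norm of U satisfies ‖U‖_op ≤ (n−1) · λ_max((m⊗m)/ρ − U). -/
open Matrix

noncomputable def opNorm {n : ℕ} (S : Matrix (Fin n) (Fin n) ℝ) : ℝ :=
  sSup {r : ℝ | ∃ v : Fin n → ℝ, (∑ i, v i ^ 2) = 1 ∧ r = |v ⬝ᵥ S.mulVec v|}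

/-!
Write `A = ρ⁻¹ m mᵀ - U` and `L = λ_max A`. Since `m mᵀ` is positive semidefinite,
`-⟪v, U v⟫ ≤ ⟪v, A v⟫ ≤ L` for every unit vector `v`; applied to eigenvectors, every eigenvalue
of `U` is at least `-L`. The eigenvalues sum to `tr U = 0`, so each one is minus the sum of the
other `n - 1`, hence at most `(n - 1) L`. These two bounds force `L ≥ 0`, so also
`-L ≥ -(n - 1) L` once `n ≥ 2` (for `n = 1`, `U = 0`). Finally, the quadratic form of `U` on unit
vectors is a convex combination of its eigenvalues.
-/

lemma le_card_sub_one_mul_of_sum_eq_zero {ι : Type*} [Fintype ι] {μ : ι → ℝ} {L : ℝ}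
    (hsum : ∑ j, μ j = 0) (hL : ∀ j, -L ≤ μ j) (i : ι) : μ i ≤ (Fintype.card ι - 1) * L := by
  classical
  have hrest : -∑ j ∈ Finset.univ.erase i, μ j = μ i := by
    linarith [Finset.add_sum_erase Finset.univ μ (Finset.mem_univ i)]
  have hcard : ((Finset.univ.erase i).card : ℝ) = Fintype.card ι - 1 := by
    rw [Finset.card_erase_of_mem (Finset.mem_univ i), Finset.card_univ,
      Nat.cast_sub (Fintype.card_pos_iff.2 ⟨i⟩), Nat.cast_one]
  calc μ i = ∑ j ∈ Finset.univ.erase i, -μ j := by rw [Finset.sum_neg_distrib, hrest]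
    _ ≤ ∑ _j ∈ Finset.univ.erase i, L := Finset.sum_le_sum fun j _ ↦ neg_le.1 (hL j)
    _ = (Fintype.card ι - 1) * L := by rw [Finset.sum_const, nsmul_eq_mul, hcard]

lemma abs_le_card_sub_one_mul_of_sum_eq_zero {ι : Type*} [Fintype ι] {μ : ι → ℝ} {L : ℝ}
    (hsum : ∑ j, μ j = 0) (hL : ∀ j, -L ≤ μ j) (i : ι) : |μ i| ≤ (Fintype.card ι - 1) * L := by
  have hupper := le_card_sub_one_mul_of_sum_eq_zero hsum hL i
  refine abs_le.2 ⟨?_, hupper⟩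
  rcases Nat.lt_or_ge 1 (Fintype.card ι) with hcard | hcard
  · have hcard' : (2 : ℝ) ≤ Fintype.card ι := by exact_mod_cast hcard
    have hL0 : 0 ≤ L := by nlinarith [hL i]
    nlinarith [hL i]
  · have : Subsingleton ι := Fintype.card_le_one_iff_subsingleton.1 hcard
    have hμi : μ i = 0 := by rwa [Fintype.sum_subsingleton μ i] at hsum
    simp [hμi, Fintype.card_eq_one_iff.2 ⟨i, fun j ↦ Subsingleton.elim j i⟩]

lemma abs_le_one_of_sum_sq_eq_one {ι : Type*} [Fintype ι] {v : ι → ℝ} (hv : ∑ i, v i ^ 2 = 1)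
    (i : ι) : |v i| ≤ 1 := by
  rw [← sq_le_one_iff_abs_le_one, ← hv]
  exact Finset.single_le_sum (fun j _ ↦ sq_nonneg (v j)) (Finset.mem_univ i)

lemma isCompact_sum_sq_eq_one (ι : Type*) [Fintype ι] :
    IsCompact {v : ι → ℝ | ∑ i, v i ^ 2 = 1} := by
  refine Metric.isCompact_of_isClosed_isBounded (isClosed_eq (by fun_prop) continuous_const) ?_
  refine (Metric.isBounded_iff_subset_closedBall 0).2 ⟨1, fun v hv ↦ ?_⟩
  rw [mem_closedBall_zero_iff, pi_norm_le_iff_of_nonneg zero_le_one]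
  exact fun i ↦ (Real.norm_eq_abs _).trans_le (abs_le_one_of_sum_sq_eq_one hv i)

lemma dotProduct_mulVec_le_lambdaMax {n : ℕ} (S : Matrix (Fin n) (Fin n) ℝ) {v : Fin n → ℝ}
    (hv : ∑ i, v i ^ 2 = 1) : v ⬝ᵥ S *ᵥ v ≤ lambdaMax S := by
  refine le_csSup ?_ ⟨v, hv, rfl⟩
  refine ((isCompact_sum_sq_eq_one (Fin n)).bddAbove_image
    (f := fun v ↦ v ⬝ᵥ S *ᵥ v) (by fun_prop)).mono ?_
  rintro _ ⟨v, hv, rfl⟩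
  exact ⟨v, hv, rfl⟩

lemma opNorm_le_of_forall_abs_le {n : ℕ} (hn : 0 < n) {S : Matrix (Fin n) (Fin n) ℝ} {c : ℝ}
    (h : ∀ v : Fin n → ℝ, ∑ i, v i ^ 2 = 1 → |v ⬝ᵥ S *ᵥ v| ≤ c) : opNorm S ≤ c := by
  refine csSup_le ⟨_, Pi.single ⟨0, hn⟩ 1, by simp [Pi.single_apply], rfl⟩ ?_
  rintro _ ⟨v, hv, rfl⟩
  exact h v hv

lemma neg_dotProduct_mulVec_le_lambdaMax_sub {n : ℕ} {P : Matrix (Fin n) (Fin n) ℝ}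
    (hP : P.PosSemidef) (U : Matrix (Fin n) (Fin n) ℝ) {v : Fin n → ℝ} (hv : ∑ i, v i ^ 2 = 1) :
    -(v ⬝ᵥ U *ᵥ v) ≤ lambdaMax (P - U) := by
  have := dotProduct_mulVec_le_lambdaMax (P - U) hv
  rw [sub_mulVec, dotProduct_sub] at this
  have hPv : 0 ≤ v ⬝ᵥ P *ᵥ v := by simpa using hP.dotProduct_mulVec_nonneg v
  linarith

namespace Matrix

variable {ι : Type*} [Fintype ι]

lemma sum_sq_transpose_mulVec [DecidableEq ι] {O : Matrix ι ι ℝ} (hO : O ∈ orthogonalGroup ι ℝ)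
    (v : ι → ℝ) : ∑ i, (Oᵀ *ᵥ v) i ^ 2 = ∑ i, v i ^ 2 := by
  simp only [sq]
  change (Oᵀ *ᵥ v) ⬝ᵥ (Oᵀ *ᵥ v) = v ⬝ᵥ v
  rw [dotProduct_mulVec, vecMul_transpose, mulVec_mulVec, (mem_orthogonalGroup_iff _ _).1 hO,
    one_mulVec]

namespace IsHermitian

variable [DecidableEq ι] {A : Matrix ι ι ℝ} (hA : A.IsHermitian)

lemma dotProduct_mulVec_eq_sum_eigenvalues (v : ι → ℝ) :
    v ⬝ᵥ A *ᵥ v =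
      ∑ i, hA.eigenvalues i * ((hA.eigenvectorUnitary : Matrix ι ι ℝ)ᵀ *ᵥ v) i ^ 2 := by
  set W : Matrix ι ι ℝ := ↑hA.eigenvectorUnitary
  have hstar : star W = Wᵀ := conjTranspose_eq_transpose_of_trivial W
  conv_lhs => rw [hA.spectral_theorem, Unitary.conjStarAlgAut_apply]
  rw [← mulVec_mulVec, ← mulVec_mulVec, dotProduct_mulVec, hstar, ← mulVec_transpose]
  simp [dotProduct, mulVec_diagonal, sq, W, mul_left_comm]

lemma sum_sq_eigenvectorBasis (i : ι) : ∑ j, hA.eigenvectorBasis i j ^ 2 = 1 := by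
  have h := hA.eigenvectorBasis.orthonormal.1 i
  rw [EuclideanSpace.norm_eq, Real.sqrt_eq_one] at h
  simpa using h

lemma dotProduct_mulVec_eigenvectorBasis (i : ι) :
    ⇑(hA.eigenvectorBasis i) ⬝ᵥ A *ᵥ ⇑(hA.eigenvectorBasis i) = hA.eigenvalues i := by
  rw [mulVec_eigenvectorBasis, dotProduct_smul, smul_eq_mul]
  simp [dotProduct, ← sq, hA.sum_sq_eigenvectorBasis i]

lemma abs_dotProduct_mulVec_le {c : ℝ} (hc : ∀ i, |hA.eigenvalues i| ≤ c) {v : ι → ℝ}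
    (hv : ∑ i, v i ^ 2 = 1) : |v ⬝ᵥ A *ᵥ v| ≤ c := by
  set w := (hA.eigenvectorUnitary : Matrix ι ι ℝ)ᵀ *ᵥ v
  have hw : ∑ i, w i ^ 2 = 1 := by rw [sum_sq_transpose_mulVec (SetLike.coe_mem _), hv]
  rw [hA.dotProduct_mulVec_eq_sum_eigenvalues]
  calc |∑ i, hA.eigenvalues i * w i ^ 2|
      ≤ ∑ i, |hA.eigenvalues i| * w i ^ 2 := by
        refine (Finset.abs_sum_le_sum_abs _ _).trans_eq (Finset.sum_congr rfl fun i _ ↦ ?_)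
        rw [abs_mul, abs_sq]
    _ ≤ ∑ i, c * w i ^ 2 := by gcongr with i; exact hc i
    _ = c := by rw [← Finset.mul_sum, hw, mul_one]

end IsHermitian

end Matrix

theorem stmt_3 {n : ℕ} (hn : 0 < n) (ρ : ℝ) (hρ : 0 < ρ) (m : Fin n → ℝ)
    (U : Matrix (Fin n) (Fin n) ℝ) (hU : U.IsSymm) (hU0 : U.trace = 0) :
    opNorm U ≤ ((n : ℝ) - 1) * lambdaMax (ρ⁻¹ • vecMulVec m m - U) := by
  have hUH : U.IsHermitian := isHermitian_iff_isSymm.2 hU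
  have hP : (ρ⁻¹ • vecMulVec m m).PosSemidef := by
    simpa using (posSemidef_vecMulVec_self_star m).smul (inv_nonneg.2 hρ.le)
  have hsum : ∑ i, hUH.eigenvalues i = 0 := by simpa [hU0] using hUH.trace_eq_sum_eigenvalues.symm
  have hlower (i : Fin n) : -lambdaMax (ρ⁻¹ • vecMulVec m m - U) ≤ hUH.eigenvalues i := by
    have := neg_dotProduct_mulVec_le_lambdaMax_sub hP U (hUH.sum_sq_eigenvectorBasis i)
    rw [hUH.dotProduct_mulVec_eigenvectorBasis] at this
    linarith
  refine opNorm_le_of_forall_abs_le hn fun v hv ↦ hUH.abs_dotProduct_mulVec_le (fun i ↦ ?_) hv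
  simpa using abs_le_card_sub_one_mul_of_sum_eq_zero hsum hlower i
end

section
/- Fix ρ > 0 and χ > 0. Define K = {(m, U) ∈ ℝⁿ × Sym₀ⁿ : U = (m⊗m)/ρ − (|m|²/(nρ))Iₙ and |m|² = ρχ}. Then the convex hull of K equals the set {(m, U) : λ_max((m⊗m)/ρ − U) ≤ χ/n}, and K equals the intersection of this convex hull with {(m, U) : |m|² = ρχ}. -/
/-!
Write `B(m, U) = (χ/n) I - (m ⊗ m / ρ - U)`. For symmetric `U`, `λ_max(m ⊗ m / ρ - U) ≤ χ/n`
says exactly that `B` is positive semidefinite, and a point `(m, U)` with `U` trace-free lies in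
`K` exactly when `B = 0` (the trace of `B = 0` gives `|m|² = ρχ`).

Along a segment, `B` is affine up to the positive semidefinite correction
`(ab/ρ) (m - m') ⊗ (m - m')`, so the relaxed set is convex. Conversely, write `B = ∑ wᵢ ⊗ wᵢ`.
Moving `(m, U)` by `s (w, (w ⊗ m + m ⊗ w - 2β w ⊗ w)/ρ)` with `β |w|² = w · m` keeps `U`
trace-free and changes `B` by `-(s² + 2βs)/ρ · w ⊗ w`. The equation `s² + 2βs = ρ` has roots
`s₁ < 0 < s₂`, so the point lies between two points at which the term `w ⊗ w` has disappeared,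
and induction on the number of terms puts it in the convex hull of `K`. Finally, on the sphere
`|m|² = ρχ` the trace of `B` vanishes, which forces `B = 0` when `B ⪰ 0`.
-/

open Matrix

section LambdaMax

variable {n : ℕ}

lemma sum_sq_eq_dotProduct_self (v : Fin n → ℝ) : ∑ i, v i ^ 2 = v ⬝ᵥ v := by
  simp only [dotProduct, sq]

lemma bddAbove_rayleigh (A : Matrix (Fin n) (Fin n) ℝ) :
    BddAbove {r : ℝ | ∃ v : Fin n → ℝ, (∑ i, v i ^ 2) = 1 ∧ r = v ⬝ᵥ A.mulVec v} := by
  have hsphere : IsCompact {v : Fin n → ℝ | ∑ i, v i ^ 2 = 1} := by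
    refine Metric.isCompact_of_isClosed_isBounded (isClosed_eq (by fun_prop) continuous_const)
      ((Metric.isBounded_closedBall (x := 0) (r := 1)).subset fun v hv => ?_)
    rw [mem_closedBall_zero_iff, pi_norm_le_iff_of_nonneg zero_le_one]
    intro i
    rw [Real.norm_eq_abs, ← sq_le_one_iff_abs_le_one, ← hv]
    exact Finset.single_le_sum (fun j _ => sq_nonneg (v j)) (Finset.mem_univ i)
  obtain ⟨C, hC⟩ := (hsphere.image (f := fun v => v ⬝ᵥ A *ᵥ v) (by fun_prop)).bddAbove
  exact ⟨C, fun r ⟨v, hv, hr⟩ => hr ▸ hC ⟨v, hv, rfl⟩⟩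

lemma lambdaMax_le_iff (hn : 0 < n) {A : Matrix (Fin n) (Fin n) ℝ} {t : ℝ} :
    lambdaMax A ≤ t ↔ ∀ v, v ⬝ᵥ A *ᵥ v ≤ t * (v ⬝ᵥ v) := by
  have hne : {r : ℝ | ∃ v : Fin n → ℝ, (∑ i, v i ^ 2) = 1 ∧ r = v ⬝ᵥ A.mulVec v}.Nonempty :=
    ⟨_, Pi.single ⟨0, hn⟩ 1, by rw [sum_sq_eq_dotProduct_self]; simp, rfl⟩
  rw [lambdaMax, csSup_le_iff (bddAbove_rayleigh A) hne]
  constructor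
  · intro h v
    rcases eq_or_ne v 0 with rfl | hv
    · simp
    have hpos : 0 < v ⬝ᵥ v := lt_of_le_of_ne (Finset.sum_nonneg fun i _ => mul_self_nonneg _)
      (Ne.symm (dotProduct_self_eq_zero.not.mpr hv))
    set c := √(v ⬝ᵥ v)
    have hc : c ^ 2 = v ⬝ᵥ v := Real.sq_sqrt hpos.le
    have hc0 : 0 < c := Real.sqrt_pos.mpr hpos
    have hunit := h _ ⟨c⁻¹ • v, ?_, rfl⟩
    · simp only [mulVec_smul, dotProduct_smul, smul_dotProduct, smul_eq_mul] at hunit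
      rw [← hc]
      field_simp at hunit
      linarith
    · rw [sum_sq_eq_dotProduct_self]
      simp only [dotProduct_smul, smul_dotProduct, smul_eq_mul]
      field_simp
      exact hc.symm
  · rintro h r ⟨v, hv, rfl⟩
    simpa [← sum_sq_eq_dotProduct_self, hv] using h v

lemma lambdaMax_le_iff_posSemidef (hn : 0 < n) {A : Matrix (Fin n) (Fin n) ℝ} (hA : A.IsSymm)
    {t : ℝ} : lambdaMax A ≤ t ↔ (t • 1 - A).PosSemidef := by
  rw [lambdaMax_le_iff hn, posSemidef_iff_dotProduct_mulVec, isHermitian_iff_isSymm]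
  simp only [star_trivial, sub_mulVec, smul_mulVec, one_mulVec, dotProduct_sub, dotProduct_smul,
    smul_eq_mul, sub_nonneg]
  exact ⟨fun h => ⟨(isSymm_one.smul t).sub hA, h⟩, fun h => h.2⟩

end LambdaMax

lemma exists_neg_pos_sq_add_mul_eq {c : ℝ} (hc : 0 < c) (β : ℝ) :
    ∃ s₁ s₂ : ℝ, s₁ < 0 ∧ 0 < s₂ ∧ s₁ ^ 2 + 2 * β * s₁ = c ∧ s₂ ^ 2 + 2 * β * s₂ = c := by
  obtain ⟨r, hr0, hr⟩ : ∃ r : ℝ, 0 ≤ r ∧ r ^ 2 = β ^ 2 + c :=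
    ⟨√(β ^ 2 + c), Real.sqrt_nonneg _, Real.sq_sqrt (by positivity)⟩
  refine ⟨-β - r, -β + r, ?_, ?_, ?_, ?_⟩ <;> nlinarith

lemma Convex.mem_of_add_smul_mem {E : Type*} [AddCommGroup E] [Module ℝ E] {C : Set E}
    (hC : Convex ℝ C) {p d : E} {s₁ s₂ : ℝ} (h₁ : s₁ < 0) (h₂ : 0 < s₂)
    (hp₁ : p + s₁ • d ∈ C) (hp₂ : p + s₂ • d ∈ C) : p ∈ C := by
  have hs : 0 < s₂ - s₁ := by linarith
  convert hC hp₁ hp₂ (a := s₂ / (s₂ - s₁)) (b := -s₁ / (s₂ - s₁)) (by positivity)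
    (div_nonneg (by linarith) hs.le) (by field_simp; ring) using 1
  match_scalars <;> field_simp <;> ring

namespace EulerRelaxation

abbrev State (n : ℕ) := (Fin n → ℝ) × Matrix (Fin n) (Fin n) ℝ

def constraintSet {n : ℕ} (ρ χ : ℝ) : Set (State n) :=
  {p | p.2 = ρ⁻¹ • vecMulVec p.1 p.1
          - ((∑ i, p.1 i ^ 2) / (n * ρ)) • (1 : Matrix (Fin n) (Fin n) ℝ) ∧
       (∑ i, p.1 i ^ 2) = ρ * χ}

noncomputable def relaxedSet {n : ℕ} (ρ χ : ℝ) : Set (State n) :=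
  {p | p.2.IsSymm ∧ p.2.trace = 0 ∧
       lambdaMax (ρ⁻¹ • vecMulVec p.1 p.1 - p.2) ≤ χ / n}

noncomputable def rankOneDirection {n : ℕ} (ρ β : ℝ) (m w : Fin n → ℝ) : State n :=
  (w, ρ⁻¹ • (vecMulVec w m + vecMulVec m w - (2 * β) • vecMulVec w w))

noncomputable def defect {n : ℕ} (ρ χ : ℝ) (p : State n) : Matrix (Fin n) (Fin n) ℝ :=
  (χ / n) • 1 - (ρ⁻¹ • vecMulVec p.1 p.1 - p.2)

variable {n : ℕ} {ρ χ : ℝ}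

lemma trace_defect (hn : 0 < n) (p : State n) :
    (defect ρ χ p).trace = χ - ρ⁻¹ * ∑ i, p.1 i ^ 2 + p.2.trace := by
  simp only [defect, trace_sub, trace_smul, trace_one, trace_vecMulVec, Fintype.card_fin,
    sum_sq_eq_dotProduct_self, smul_eq_mul]
  field_simp
  ring

lemma mem_relaxedSet_iff (hn : 0 < n) {p : State n} :
    p ∈ relaxedSet ρ χ ↔ p.2.trace = 0 ∧ (defect ρ χ p).PosSemidef := by
  have hA : (ρ⁻¹ • vecMulVec p.1 p.1).IsSymm := IsSymm.smul (transpose_vecMulVec p.1 p.1) ρ⁻¹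
  constructor
  · rintro ⟨hU, htr, hmax⟩
    exact ⟨htr, (lambdaMax_le_iff_posSemidef hn (hA.sub hU)).1 hmax⟩
  · rintro ⟨htr, hpsd⟩
    have hU : p.2.IsSymm := by
      simpa [defect] using hA.sub ((isSymm_one.smul (χ / n)).sub (isHermitian_iff_isSymm.1 hpsd.1))
    exact ⟨hU, htr, (lambdaMax_le_iff_posSemidef hn (hA.sub hU)).2 hpsd⟩

lemma mem_constraintSet_iff (hn : 0 < n) (hρ : ρ ≠ 0) {p : State n} :
    p ∈ constraintSet ρ χ ↔ p.2.trace = 0 ∧ defect ρ χ p = 0 := by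
  have htrace := trace_defect (ρ := ρ) (χ := χ) hn p
  have hn' : (n : ℝ) ≠ 0 := by positivity
  constructor
  · rintro ⟨hU, hsum⟩
    have hcoef : (∑ i, p.1 i ^ 2) / (n * ρ) = χ / n := by
      rw [hsum]; field_simp
    have hdef : defect ρ χ p = 0 := by simp [defect, hU, hcoef]
    refine ⟨?_, hdef⟩
    rw [hdef, trace_zero, hsum] at htrace
    field_simp at htrace
    linarith
  · rintro ⟨htr, hdef⟩
    rw [hdef, trace_zero, htr] at htrace
    have hsum : (∑ i, p.1 i ^ 2) = ρ * χ := by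
      field_simp at htrace
      linarith
    refine ⟨?_, hsum⟩
    rw [defect, sub_eq_zero] at hdef
    rw [hsum, show ρ * χ / (n * ρ) = χ / n by field_simp, hdef, sub_sub_cancel]

lemma defect_convexCombination {p q : State n} {a b : ℝ} (hab : a + b = 1) :
    defect ρ χ (a • p + b • q) = a • defect ρ χ p + b • defect ρ χ q
      + (a * b * ρ⁻¹) • vecMulVec (p.1 - q.1) (p.1 - q.1) := by
  obtain rfl : b = 1 - a := by linarith
  ext i j
  simp only [defect, Prod.fst_add, Prod.snd_add, Prod.smul_fst, Prod.smul_snd, Matrix.add_apply,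
    Matrix.sub_apply, Matrix.smul_apply, vecMulVec_apply, Pi.add_apply, Pi.sub_apply, Pi.smul_apply,
    smul_eq_mul]
  ring

lemma convex_relaxedSet (hn : 0 < n) (hρ : 0 < ρ) : Convex ℝ (relaxedSet (n := n) ρ χ) := by
  intro p hp q hq a b ha hb hab
  rw [mem_relaxedSet_iff hn] at hp hq ⊢
  refine ⟨?_, ?_⟩
  · simp [hp.1, hq.1]
  · rw [defect_convexCombination hab]
    refine ((hp.2.smul ha).add (hq.2.smul hb)).add ((posSemidef_vecMulVec_self_star _).smul ?_)
    exact mul_nonneg (mul_nonneg ha hb) (inv_nonneg.2 hρ.le)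

lemma constraintSet_subset_relaxedSet (hn : 0 < n) (hρ : ρ ≠ 0) :
    constraintSet (n := n) ρ χ ⊆ relaxedSet ρ χ := fun p hp => by
  obtain ⟨htr, hdef⟩ := (mem_constraintSet_iff hn hρ).1 hp
  exact (mem_relaxedSet_iff hn).2 ⟨htr, hdef ▸ PosSemidef.zero⟩

lemma trace_rankOneDirection_eq_zero {β : ℝ} {m w : Fin n → ℝ} (hβ : β * (w ⬝ᵥ w) = w ⬝ᵥ m) :
    (rankOneDirection ρ β m w).2.trace = 0 := by
  simp only [rankOneDirection, trace_smul, trace_sub, trace_add, trace_vecMulVec,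
    dotProduct_comm m w, smul_eq_mul, mul_assoc, hβ]
  ring

lemma defect_add_smul_rankOneDirection (p : State n) (β s : ℝ) (w : Fin n → ℝ) :
    defect ρ χ (p + s • rankOneDirection ρ β p.1 w)
      = defect ρ χ p - (ρ⁻¹ * (s ^ 2 + 2 * β * s)) • vecMulVec w w := by
  ext i j
  simp only [defect, rankOneDirection, Prod.fst_add, Prod.snd_add, Prod.smul_fst, Prod.smul_snd,
    Matrix.add_apply, Matrix.sub_apply, Matrix.smul_apply, vecMulVec_apply, Pi.add_apply,
    Pi.smul_apply, smul_eq_mul]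
  ring

lemma mem_convexHull_of_defect_eq_sum (hn : 0 < n) (hρ : 0 < ρ) {ι : Type*} (s : Finset ι)
    (v : ι → Fin n → ℝ) {p : State n} (htr : p.2.trace = 0)
    (hdef : defect ρ χ p = ∑ i ∈ s, vecMulVec (v i) (v i)) :
    p ∈ convexHull ℝ (constraintSet ρ χ) := by
  classical
  induction s using Finset.induction_on generalizing p with
  | empty =>
    exact subset_convexHull ℝ _ ((mem_constraintSet_iff hn hρ.ne').2 ⟨htr, by simpa using hdef⟩)
  | insert j s hj ih =>
    rw [Finset.sum_insert hj] at hdef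
    set w := v j
    by_cases hw : w = 0
    · exact ih htr (by simpa [hw] using hdef)
    set β := (w ⬝ᵥ p.1) / (w ⬝ᵥ w)
    have hβ : β * (w ⬝ᵥ w) = w ⬝ᵥ p.1 := div_mul_cancel₀ _ (dotProduct_self_eq_zero.not.mpr hw)
    obtain ⟨s₁, s₂, hs₁, hs₂, hroot₁, hroot₂⟩ := exists_neg_pos_sq_add_mul_eq hρ β
    have hsplit : ∀ t, t ^ 2 + 2 * β * t = ρ →
        p + t • rankOneDirection ρ β p.1 w ∈ convexHull ℝ (constraintSet ρ χ) := by
      intro t ht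
      refine ih ?_ ?_
      · simp [htr, trace_rankOneDirection_eq_zero hβ]
      · rw [defect_add_smul_rankOneDirection, ht, inv_mul_cancel₀ hρ.ne', one_smul, hdef,
          add_sub_cancel_left]
    exact (convex_convexHull ℝ _).mem_of_add_smul_mem hs₁ hs₂ (hsplit _ hroot₁) (hsplit _ hroot₂)

lemma relaxedSet_subset_convexHull (hn : 0 < n) (hρ : 0 < ρ) :
    relaxedSet ρ χ ⊆ convexHull ℝ (constraintSet (n := n) ρ χ) := fun p hp => by
  obtain ⟨htr, hpsd⟩ := (mem_relaxedSet_iff hn).1 hp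
  obtain ⟨k, v, hv⟩ := posSemidef_iff_eq_sum_vecMulVec.1 hpsd
  exact mem_convexHull_of_defect_eq_sum hn hρ Finset.univ v htr (by simpa using hv)

lemma relaxedSet_inter_sphere_subset_constraintSet (hn : 0 < n) (hρ : 0 < ρ) :
    relaxedSet ρ χ ∩ {p : State n | (∑ i, p.1 i ^ 2) = ρ * χ} ⊆ constraintSet ρ χ := by
  rintro p ⟨hp, hsum : (∑ i, p.1 i ^ 2) = ρ * χ⟩
  obtain ⟨htr, hpsd⟩ := (mem_relaxedSet_iff hn).1 hp
  refine (mem_constraintSet_iff hn hρ.ne').2 ⟨htr, hpsd.trace_eq_zero_iff.1 ?_⟩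
  rw [trace_defect hn, hsum, htr]
  field_simp
  ring

end EulerRelaxation

theorem stmt_4_general {n : ℕ} (hn : 0 < n) (ρ χ : ℝ) (hρ : 0 < ρ) :
    let K : Set ((Fin n → ℝ) × Matrix (Fin n) (Fin n) ℝ) :=
      {p | p.2 = ρ⁻¹ • vecMulVec p.1 p.1
              - ((∑ i, p.1 i ^ 2) / (n * ρ)) • (1 : Matrix (Fin n) (Fin n) ℝ) ∧
           (∑ i, p.1 i ^ 2) = ρ * χ}
    let S : Set ((Fin n → ℝ) × Matrix (Fin n) (Fin n) ℝ) :=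
      {p | p.2.IsSymm ∧ p.2.trace = 0 ∧
           lambdaMax (ρ⁻¹ • vecMulVec p.1 p.1 - p.2) ≤ χ / n}
    convexHull ℝ K = S ∧ K = S ∩ {p | (∑ i, p.1 i ^ 2) = ρ * χ} := by
  intro K S
  have hKS : K ⊆ S := EulerRelaxation.constraintSet_subset_relaxedSet hn hρ.ne'
  open EulerRelaxation in
  exact ⟨(convexHull_min hKS (convex_relaxedSet hn hρ)).antisymm
      (relaxedSet_subset_convexHull hn hρ),
    (Set.subset_inter hKS fun p hp => hp.2).antisymm
      (relaxedSet_inter_sphere_subset_constraintSet hn hρ)⟩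

theorem stmt_4 {n : ℕ} (hn : 0 < n) (ρ χ : ℝ) (hρ : 0 < ρ) (hχ : 0 < χ) :
    let K : Set ((Fin n → ℝ) × Matrix (Fin n) (Fin n) ℝ) :=
      {p | p.2 = ρ⁻¹ • vecMulVec p.1 p.1
              - ((∑ i, p.1 i ^ 2) / (n * ρ)) • (1 : Matrix (Fin n) (Fin n) ℝ) ∧
           (∑ i, p.1 i ^ 2) = ρ * χ}
    let S : Set ((Fin n → ℝ) × Matrix (Fin n) (Fin n) ℝ) :=
      {p | p.2.IsSymm ∧ p.2.trace = 0 ∧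
           lambdaMax (ρ⁻¹ • vecMulVec p.1 p.1 - p.2) ≤ χ / n}
    convexHull ℝ K = S ∧ K = S ∩ {p | (∑ i, p.1 i ^ 2) = ρ * χ} :=
  stmt_4_general hn ρ χ hρ
end
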